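/- arXiv:2303.12288 — 2 statements merged into one kernel-verified Lean document; each statement's English description precedes it below -/
import Mathlib

section
/- For every (n+1)×(n+1) complex matrix E, the matrix X := (1/(2s))·E − (c/(4s²))·(F₂·E + E·F₁) + (c²/(4s³))·F₂·E·F₁ is the unique solution of the Sylvester equation (s·I_{n+1} + c·F₂)·X + X·(s·I_{n+1} + c·F₁) = E. -/
noncomputable section

open Matrix

/-- Block matrix `[[T, col, 0], [row, d, 0], [0, 0, e]]` of size `(n+1) × (n+1)`,
with blocks of sizes `n-1, 1, 1`. -/
def blk (n : ℕ) (T : Fin (n-1) → Fin (n-1) → ℂ) (colv rowv : Fin (n-1) → ℂ)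
    (d e : ℂ) : Matrix (Fin (n+1)) (Fin (n+1)) ℂ :=
  Matrix.of fun i j =>
    if hi : (i : ℕ) < n - 1 then
      if hj : (j : ℕ) < n - 1 then T ⟨i, hi⟩ ⟨j, hj⟩
      else if (j : ℕ) = n - 1 then colv ⟨i, hi⟩ else 0
    else if (i : ℕ) = n - 1 then
      if hj : (j : ℕ) < n - 1 then rowv ⟨j, hj⟩
      else if (j : ℕ) = n - 1 then d else 0
    else if (j : ℕ) = n then e else 0

/-- The matrix `F₁ = [[(1/s)ξ♯ξᵀ, i ξ♯, 0], [i ξᵀ, −s, 0], [0, 0, 0]]`. -/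
def F1mat (n : ℕ) (ξ ξs : Fin (n-1) → ℝ) (s : ℝ) :
    Matrix (Fin (n+1)) (Fin (n+1)) ℂ :=
  blk n (fun a b => ((1 / s * ξs a * ξ b : ℝ) : ℂ))
    (fun a => Complex.I * ((ξs a : ℝ) : ℂ))
    (fun b => Complex.I * ((ξ b : ℝ) : ℂ))
    ((-s : ℝ) : ℂ) 0

/-- The matrix `F₂ = [[(1/s)ξ♯ξᵀ, −i((λ+2μ)/μ) ξ♯, 0], [−i(μ/(λ+2μ)) ξᵀ, −s, 0], [0, 0, 0]]`. -/
def F2mat (n : ℕ) (ξ ξs : Fin (n-1) → ℝ) (s lam mu : ℝ) :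
    Matrix (Fin (n+1)) (Fin (n+1)) ℂ :=
  blk n (fun a b => ((1 / s * ξs a * ξ b : ℝ) : ℂ))
    (fun a => -(Complex.I * (((lam + 2*mu)/mu * ξs a : ℝ) : ℂ)))
    (fun b => -(Complex.I * ((mu/(lam + 2*mu) * ξ b : ℝ) : ℂ)))
    ((-s : ℝ) : ℂ) 0

/-- `b₁ = i(λ+μ)·[[0, (1/μ) ξ♯, 0], [(1/(λ+2μ)) ξᵀ, 0, 0], [0, 0, 0]]`. -/
def b1mat (n : ℕ) (ξ ξs : Fin (n-1) → ℝ) (lam mu : ℝ) :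
    Matrix (Fin (n+1)) (Fin (n+1)) ℂ :=
  (Complex.I * ((lam + mu : ℝ) : ℂ)) •
    blk n (fun _ _ => 0)
      (fun a => ((1/mu * ξs a : ℝ) : ℂ))
      (fun b => ((1/(lam + 2*mu) * ξ b : ℝ) : ℂ)) 0 0

/-- `c₂ = −[[s²·I + ((λ+μ)/μ) ξ♯ξᵀ, 0, 0], [0, (μ/(λ+2μ)) s², 0], [0, 0, s²]]`. -/
def c2mat (n : ℕ) (ξ ξs : Fin (n-1) → ℝ) (s lam mu : ℝ) :
    Matrix (Fin (n+1)) (Fin (n+1)) ℂ :=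
  -(blk n
      (fun a b => ((s^2 * (if a = b then 1 else 0) + (lam + mu)/mu * ξs a * ξ b : ℝ) : ℂ))
      (fun _ => 0) (fun _ => 0)
      ((mu/(lam + 2*mu) * s^2 : ℝ) : ℂ) ((s^2 : ℝ) : ℂ))

/-- The principal symbol `p₁` of the thermoelastic Dirichlet-to-Neumann map. -/
def p1mat (n : ℕ) (ξ ξs : Fin (n-1) → ℝ) (s lam mu al : ℝ) :
    Matrix (Fin (n+1)) (Fin (n+1)) ℂ :=
  blk n
    (fun a b => ((mu * s * (if a = b then 1 else 0)
        + mu * (lam + mu)/((lam + 3*mu) * s) * ξs a * ξ b : ℝ) : ℂ))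
    (fun a => -(Complex.I * ((2 * mu^2/(lam + 3*mu) * ξs a : ℝ) : ℂ)))
    (fun b => Complex.I * ((2 * mu^2/(lam + 3*mu) * ξ b : ℝ) : ℂ))
    ((2 * mu * (lam + 2*mu)/(lam + 3*mu) * s : ℝ) : ℂ)
    ((al * s : ℝ) : ℂ)

/-- `A = blockdiag(μ·I, λ+2μ, α)`. -/
def Amat (n : ℕ) (lam mu al : ℝ) : Matrix (Fin (n+1)) (Fin (n+1)) ℂ :=
  blk n (fun a b => if a = b then ((mu : ℝ) : ℂ) else 0)
    (fun _ => 0) (fun _ => 0) ((lam + 2*mu : ℝ) : ℂ) ((al : ℝ) : ℂ)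

/-- `d₁ = [[0, iμ ξ♯, 0], [iλ ξᵀ, 0, 0], [0, 0, 0]]`. -/
def d1mat (n : ℕ) (ξ ξs : Fin (n-1) → ℝ) (lam mu : ℝ) :
    Matrix (Fin (n+1)) (Fin (n+1)) ℂ :=
  blk n (fun _ _ => 0)
    (fun a => Complex.I * ((mu * ξs a : ℝ) : ℂ))
    (fun b => Complex.I * ((lam * ξ b : ℝ) : ℂ)) 0 0

/-- `W = blockdiag(G⁻¹, 1, 1)`. -/
def Wmat (n : ℕ) (G : Matrix (Fin (n-1)) (Fin (n-1)) ℝ) :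
    Matrix (Fin (n+1)) (Fin (n+1)) ℂ :=
  blk n (fun a b => ((G⁻¹ a b : ℝ) : ℂ)) (fun _ => 0) (fun _ => 0) 1 1

/-!
Both `F₁` and `F₂` are rank one, `F = u wᵀ` with `wᵀ u = 0`: for `F₁`, `u = (ξ♯ / s, i, 0)` and
`w = (ξ, i s, 0)`, and `wᵀ u = ξᵀ ξ♯ / s - s = 0` because `ξᵀ ξ♯ = s²`. Hence `F₁² = F₂² = 0`, and
the Sylvester operator `Y ↦ (s + c F₂) Y + Y (s + c F₁)` is `2 s` plus a nilpotent operator, whose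
inverse is the explicit formula for `X`; being a two-sided inverse gives existence and uniqueness.
-/

section Sylvester

variable {K R : Type*} [Field K] [CharZero K] [Ring R] [Algebra K R]

/-- With `N Y := P * Y + Y * Q` we have `N ^ 2 Y = 2 * P * Y * Q` and `N ^ 3 = 0`, so the Sylvester
operator `2 s + c N` is inverted by the truncated Neumann series
`(2 s)⁻¹ (1 - c N / (2 s) + (c N / (2 s)) ^ 2)`, which is this formula. -/
def sylvesterSolution (s c : K) (P Q E : R) : R :=
  (1 / (2 * s)) • E - (c / (4 * s ^ 2)) • (P * E + E * Q) + (c ^ 2 / (4 * s ^ 3)) • (P * E * Q)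

variable {s : K} (c : K) {P Q : R}

theorem sylvester_apply_sylvesterSolution (hs : s ≠ 0) (hP : P * P = 0) (hQ : Q * Q = 0) (E : R) :
    (s • 1 + c • P) * sylvesterSolution s c P Q E + sylvesterSolution s c P Q E * (s • 1 + c • Q)
      = E := by
  have hP' : ∀ x : R, P * (P * x) = 0 := fun x => by rw [← mul_assoc, hP, zero_mul]
  simp only [sylvesterSolution, mul_add, add_mul, mul_sub, sub_mul, smul_mul_assoc,
    mul_smul_comm, smul_smul, mul_assoc, hQ, hP', smul_zero, mul_zero, mul_one, one_mul,
    smul_add, smul_sub]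
  match_scalars <;> field_simp <;> ring

theorem sylvesterSolution_apply_sylvester (hs : s ≠ 0) (hP : P * P = 0) (hQ : Q * Q = 0) (Y : R) :
    sylvesterSolution s c P Q ((s • 1 + c • P) * Y + Y * (s • 1 + c • Q)) = Y := by
  have hP' : ∀ x : R, P * (P * x) = 0 := fun x => by rw [← mul_assoc, hP, zero_mul]
  simp only [sylvesterSolution, mul_add, add_mul, smul_mul_assoc, mul_smul_comm, smul_smul,
    mul_assoc, hQ, hP', smul_zero, zero_mul, mul_zero, mul_one, one_mul, smul_add]
  match_scalars <;> field_simp <;> ring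

end Sylvester

def blkVec (n : ℕ) (v : Fin (n-1) → ℂ) (x y : ℂ) : Fin (n+1) → ℂ :=
  fun i => if hi : (i : ℕ) < n - 1 then v ⟨i, hi⟩ else if (i : ℕ) = n - 1 then x else y

theorem blk_eq_vecMulVec (n : ℕ) (u w : Fin (n-1) → ℂ) (x y : ℂ) :
    blk n (fun a b => u a * w b) (fun a => u a * y) (fun b => x * w b) (x * y) 0
      = vecMulVec (blkVec n u x 0) (blkVec n w y 0) := by
  ext i j
  simp only [blk, blkVec, of_apply, vecMulVec_apply]
  split_ifs <;> simp_all

theorem blkVec_dotProduct_blkVec {n : ℕ} (hn : 1 ≤ n) (v w : Fin (n-1) → ℂ) (x y x' y' : ℂ) :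
    blkVec n v x y ⬝ᵥ blkVec n w x' y' = v ⬝ᵥ w + x * x' + y * y' := by
  obtain ⟨m, rfl⟩ : ∃ m, n = m + 1 := ⟨n - 1, by omega⟩
  simp [dotProduct, Fin.sum_univ_castSucc, blkVec]

theorem vecMulVec_mul_self_of_dotProduct_eq_zero {m α : Type*} [Fintype m] [CommRing α]
    {u v : m → α} (h : v ⬝ᵥ u = 0) :
    vecMulVec u v * vecMulVec u v = 0 := by
  rw [vecMulVec_mul_vecMulVec, h, zero_smul]
  ext; simp [vecMulVec_apply]

section

variable {n : ℕ} {ξ ξs : Fin (n-1) → ℝ} {s : ℝ}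

theorem ofReal_dotProduct_div (hξ : ξ ⬝ᵥ ξs = s ^ 2) :
    (fun b => (ξ b : ℂ)) ⬝ᵥ (fun a => (ξs a : ℂ) / s) = s := by
  have hξC : ((ξ ⬝ᵥ ξs : ℝ) : ℂ) = (s : ℂ) ^ 2 := by exact_mod_cast hξ
  simp only [dotProduct, Complex.ofReal_sum, Complex.ofReal_mul] at hξC
  simp only [dotProduct, mul_div_assoc', ← Finset.sum_div, hξC]
  field_simp

theorem F1mat_eq_vecMulVec (hs : s ≠ 0) :
    F1mat n ξ ξs s = vecMulVec (blkVec n (fun a => ξs a / s) Complex.I 0)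
      (blkVec n (fun b => ξ b) (Complex.I * s) 0) := by
  have hsC : (s : ℂ) ≠ 0 := Complex.ofReal_ne_zero.mpr hs
  rw [← blk_eq_vecMulVec, F1mat]
  congr 1
  all_goals (try funext); push_cast; field_simp
  simp

theorem F2mat_eq_vecMulVec (hs : s ≠ 0) {lam mu : ℝ} (hmu : mu ≠ 0) (hlm : lam + 2 * mu ≠ 0) :
    F2mat n ξ ξs s lam mu = vecMulVec
      (blkVec n (fun a => ξs a / s) (-(Complex.I * (mu / (lam + 2 * mu) : ℝ))) 0)
      (blkVec n (fun b => ξ b) (-(Complex.I * ((lam + 2 * mu) / mu * s : ℝ))) 0) := by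
  have hsC : (s : ℂ) ≠ 0 := Complex.ofReal_ne_zero.mpr hs
  have hmuC : (mu : ℂ) ≠ 0 := Complex.ofReal_ne_zero.mpr hmu
  have hlmC : (lam + mu * 2 : ℂ) ≠ 0 := by rw [mul_comm]; exact_mod_cast hlm
  rw [← blk_eq_vecMulVec, F2mat]
  congr 1
  all_goals (try funext); push_cast; field_simp
  simp

theorem F1mat_mul_self (hn : 1 ≤ n) (hs : s ≠ 0) (hξ : ξ ⬝ᵥ ξs = s ^ 2) :
    F1mat n ξ ξs s * F1mat n ξ ξs s = 0 := by
  rw [F1mat_eq_vecMulVec hs]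
  apply vecMulVec_mul_self_of_dotProduct_eq_zero
  rw [blkVec_dotProduct_blkVec hn, ofReal_dotProduct_div hξ]
  linear_combination (s : ℂ) * Complex.I_mul_I

theorem F2mat_mul_self (hn : 1 ≤ n) (hs : s ≠ 0) {lam mu : ℝ} (hmu : mu ≠ 0)
    (hlm : lam + 2 * mu ≠ 0) (hξ : ξ ⬝ᵥ ξs = s ^ 2) :
    F2mat n ξ ξs s lam mu * F2mat n ξ ξs s lam mu = 0 := by
  rw [F2mat_eq_vecMulVec hs hmu hlm]
  apply vecMulVec_mul_self_of_dotProduct_eq_zero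
  rw [blkVec_dotProduct_blkVec hn, ofReal_dotProduct_div hξ]
  have hprod : (lam + 2 * mu) / mu * s * (mu / (lam + 2 * mu)) = s := by field_simp
  rw [neg_mul_neg, mul_mul_mul_comm, Complex.I_mul_I, ← Complex.ofReal_mul, hprod]
  ring

end

theorem stmt8_general (n : ℕ) (hn : 2 ≤ n)
    (G : Matrix (Fin (n-1)) (Fin (n-1)) ℝ) (hG : G.PosDef)
    (ξ : Fin (n-1) → ℝ) (hξ : ξ ≠ 0)
    (ξs : Fin (n-1) → ℝ) (hξs : ξs = G.mulVec ξ)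
    (s : ℝ) (hs : s = Real.sqrt (ξ ⬝ᵥ G.mulVec ξ))
    (lam mu : ℝ) (hmu : 0 < mu) (hlm : 0 ≤ lam + mu)
    (c : ℝ) :
    ∀ E : Matrix (Fin (n+1)) (Fin (n+1)) ℂ,
    ∀ X : Matrix (Fin (n+1)) (Fin (n+1)) ℂ,
    X = (1/(2*(s : ℂ))) • E
        - ((c : ℂ)/(4*(s : ℂ)^2)) • (F2mat n ξ ξs s lam mu * E + E * F1mat n ξ ξs s)
        + ((c : ℂ)^2/(4*(s : ℂ)^3)) • (F2mat n ξ ξs s lam mu * E * F1mat n ξ ξs s) →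
    (((s : ℂ) • (1 : Matrix (Fin (n+1)) (Fin (n+1)) ℂ) + (c : ℂ) • F2mat n ξ ξs s lam mu) * X
        + X * ((s : ℂ) • (1 : Matrix (Fin (n+1)) (Fin (n+1)) ℂ) + (c : ℂ) • F1mat n ξ ξs s) = E
      ∧ ∀ Y : Matrix (Fin (n+1)) (Fin (n+1)) ℂ,
        ((s : ℂ) • (1 : Matrix (Fin (n+1)) (Fin (n+1)) ℂ) + (c : ℂ) • F2mat n ξ ξs s lam mu) * Y
          + Y * ((s : ℂ) • (1 : Matrix (Fin (n+1)) (Fin (n+1)) ℂ) + (c : ℂ) • F1mat n ξ ξs s) = E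
        → Y = X) := by
  intro E X hX
  have hpos : 0 < ξ ⬝ᵥ G *ᵥ ξ := hG.dotProduct_mulVec_pos hξ
  have hs0 : s ≠ 0 := hs ▸ (Real.sqrt_pos.mpr hpos).ne'
  have hsC : (s : ℂ) ≠ 0 := Complex.ofReal_ne_zero.mpr hs0
  have hkey : ξ ⬝ᵥ ξs = s ^ 2 := by rw [hξs, hs, Real.sq_sqrt hpos.le]
  have hF1 := F1mat_mul_self (by omega) hs0 hkey
  have hF2 := F2mat_mul_self (by omega) hs0 hmu.ne' (by linarith : 0 < lam + 2 * mu).ne' hkey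
  obtain rfl : X = sylvesterSolution (s : ℂ) c (F2mat n ξ ξs s lam mu) (F1mat n ξ ξs s) E := hX
  refine ⟨sylvester_apply_sylvesterSolution _ hsC hF2 hF1 E, fun Y hY => ?_⟩
  rw [← sylvesterSolution_apply_sylvester (c : ℂ) hsC hF2 hF1 Y, hY]

/-- the explicit matrix X is the unique solution of the Sylvester equation
(s·I + c·F₂)·X + X·(s·I + c·F₁) = E. -/
theorem stmt8 (n : ℕ) (hn : 2 ≤ n)
    (G : Matrix (Fin (n-1)) (Fin (n-1)) ℝ) (hG : G.PosDef)
    (ξ : Fin (n-1) → ℝ) (hξ : ξ ≠ 0)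
    (ξs : Fin (n-1) → ℝ) (hξs : ξs = G.mulVec ξ)
    (s : ℝ) (hs : s = Real.sqrt (ξ ⬝ᵥ G.mulVec ξ))
    (lam mu : ℝ) (hmu : 0 < mu) (hlm : 0 ≤ lam + mu)
    (c : ℝ) (hc : c = (lam + mu)/(lam + 3*mu)) :
    ∀ E : Matrix (Fin (n+1)) (Fin (n+1)) ℂ,
    ∀ X : Matrix (Fin (n+1)) (Fin (n+1)) ℂ,
    X = (1/(2*(s : ℂ))) • E
        - ((c : ℂ)/(4*(s : ℂ)^2)) • (F2mat n ξ ξs s lam mu * E + E * F1mat n ξ ξs s)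
        + ((c : ℂ)^2/(4*(s : ℂ)^3)) • (F2mat n ξ ξs s lam mu * E * F1mat n ξ ξs s) →
    (((s : ℂ) • (1 : Matrix (Fin (n+1)) (Fin (n+1)) ℂ) + (c : ℂ) • F2mat n ξ ξs s lam mu) * X
        + X * ((s : ℂ) • (1 : Matrix (Fin (n+1)) (Fin (n+1)) ℂ) + (c : ℂ) • F1mat n ξ ξs s) = E
      ∧ ∀ Y : Matrix (Fin (n+1)) (Fin (n+1)) ℂ,
        ((s : ℂ) • (1 : Matrix (Fin (n+1)) (Fin (n+1)) ℂ) + (c : ℂ) • F2mat n ξ ξs s lam mu) * Y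
          + Y * ((s : ℂ) • (1 : Matrix (Fin (n+1)) (Fin (n+1)) ℂ) + (c : ℂ) • F1mat n ξ ξs s) = E
        → Y = X) :=
  stmt8_general n hn G hG ξ hξ ξs hξs s hs lam mu hmu hlm c
end
end

section
/- For every u ∈ ℂ^{n+1} one has u*·(W·p₁)·u ≥ 0 (positive semidefiniteness), where W := blockdiag(G⁻¹, 1, 1) and p₁ := [[μs·I_{n−1} + (μ(λ+μ)/((λ+3μ)s))·ξ♯ξᵀ, −(2iμ²/(λ+3μ))·ξ♯, 0], [(2iμ²/(λ+3μ))·ξᵀ, (2μ(λ+2μ)/(λ+3μ))·s, 0], [0, 0, αs]]. -/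
noncomputable section

open Matrix

open scoped ComplexOrder

/-!
Reindexing rows and columns as `((Fin (n-1) ⊕ Unit) ⊕ Unit)`, `W·p₁` becomes block diagonal:
a block `[[A, b], [b*, d]]` with `A = μs G⁻¹ + (μ(λ+μ)/((λ+3μ)s)) ξξᵀ`, `b = -(2iμ²/(λ+3μ)) ξ`,
`d = 2μ(λ+2μ)s/(λ+3μ) > 0`, and the entry `αs > 0`. Taking Schur complements, it suffices that
`A - d⁻¹ b b* = μs (G⁻¹ - s⁻² ξξᵀ) + (2μ(λ+μ)/((λ+2μ)s)) ξξᵀ` is positive semidefinite: the first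
summand is by Cauchy–Schwarz for the inner product given by `G`, the second because `λ + μ ≥ 0`.
-/

theorem Matrix.PosSemidef.map_ofReal {m : Type*} [Fintype m] {M : Matrix m m ℝ}
    (hM : M.PosSemidef) : (M.map ((↑) : ℝ → ℂ)).PosSemidef := by
  classical
  open scoped MatrixOrder in
  obtain ⟨B, rfl⟩ := CStarAlgebra.nonneg_iff_eq_star_mul_self.mp hM.nonneg
  change ((star B * B).map Complex.ofRealHom).PosSemidef
  rw [Matrix.map_mul, star_eq_conjTranspose,
    conjTranspose_map (⇑Complex.ofRealHom) fun x => (Complex.conj_ofReal x).symm]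
  exact posSemidef_conjTranspose_mul_self _

section SchurComplement

variable {m m' 𝕜 : Type*} [Fintype m] [Field 𝕜] [PartialOrder 𝕜] [StarRing 𝕜]
  [StarOrderedRing 𝕜]

theorem Matrix.posSemidef_fromBlocks_zero_iff [Fintype m'] [DecidableEq m'] (A : Matrix m m 𝕜)
    {D : Matrix m' m' 𝕜} (hD : D.PosDef) :
    (fromBlocks A 0 0 D).PosSemidef ↔ A.PosSemidef := by
  let := hD.isUnit.invertible
  simpa using PosDef.fromBlocks₂₂ A (0 : Matrix m m' 𝕜) hD

theorem Matrix.posSemidef_fromBlocks_replicateCol_iff (A : Matrix m m 𝕜) (b : m → 𝕜) {d : 𝕜}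
    (hd : 0 < d) :
    (fromBlocks A (replicateCol Unit b) (replicateRow Unit (star b))
        (diagonal fun _ => d)).PosSemidef ↔
      (A - d⁻¹ • vecMulVec b (star b)).PosSemidef := by
  have hD : (diagonal fun _ : Unit => d).PosDef := posDef_diagonal_iff.mpr fun _ => hd
  let := hD.isUnit.invertible
  have hB : replicateCol Unit b * (diagonal fun _ : Unit => d)⁻¹ * replicateRow Unit (star b) =
      d⁻¹ • vecMulVec b (star b) := by
    ext i j
    simp only [inv_subsingleton, diagonal_apply_eq, Ring.inverse_eq_inv', mul_apply,
      Finset.univ_unique, Finset.sum_singleton, replicateCol_apply, replicateRow_apply,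
      Pi.star_apply, vecMulVec, smul_apply, of_apply, smul_eq_mul]
    ring
  rw [← conjTranspose_replicateCol, PosDef.fromBlocks₂₂ _ _ hD, conjTranspose_replicateCol, hB]

/-- Cauchy–Schwarz for the inner product `G`, in matrix form:
`|⟪x, v⟫|² ≤ (x* G x) (v* G⁻¹ v)`. -/
theorem Matrix.PosDef.posSemidef_inv_sub_smul_vecMulVec [DecidableEq m] {G : Matrix m m 𝕜}
    (hG : G.PosDef) (x : m → 𝕜) :
    (G⁻¹ - (star x ⬝ᵥ G *ᵥ x)⁻¹ • vecMulVec x (star x)).PosSemidef := by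
  rcases eq_or_ne x 0 with rfl | hx
  · simpa using hG.inv.posSemidef
  let := hG.inv.isUnit.invertible
  -- both Schur complements of `[[G⁻¹, x], [x*, x* G x]]`: the other one vanishes
  rw [← posSemidef_fromBlocks_replicateCol_iff _ _ (hG.dotProduct_mulVec_pos hx),
    ← conjTranspose_replicateCol, PosDef.fromBlocks₁₁ _ _ hG.inv,
    nonsing_inv_nonsing_inv _ ((isUnit_iff_isUnit_det G).mp hG.isUnit),
    conjTranspose_replicateCol, ← replicateRow_vecMul, replicateRow_mul_replicateCol,
    ← dotProduct_mulVec]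
  convert PosSemidef.zero
  ext
  simp

end SchurComplement

def blkIndexEquiv (n : ℕ) (hn : 1 ≤ n) : (Fin (n-1) ⊕ Unit) ⊕ Unit ≃ Fin (n+1) where
  toFun
    | .inl (.inl a) => ⟨a, by omega⟩
    | .inl (.inr _) => ⟨n - 1, by omega⟩
    | .inr _ => ⟨n, by omega⟩
  invFun i :=
    if h : (i : ℕ) < n - 1 then .inl (.inl ⟨i, h⟩)
    else if (i : ℕ) = n - 1 then .inl (.inr ()) else .inr ()
  left_inv := by
    rintro ((a | _) | _)
    · simp
    · simp
    · simp [show ¬ n < n - 1 by omega, show n ≠ n - 1 by omega]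
  right_inv i := by
    dsimp only
    split_ifs <;> ext <;> simp only <;> omega

theorem blk_submatrix_blkIndexEquiv {n : ℕ} (hn : 1 ≤ n) (T : Fin (n-1) → Fin (n-1) → ℂ)
    (c r : Fin (n-1) → ℂ) (d e : ℂ) :
    (blk n T c r d e).submatrix (blkIndexEquiv n hn) (blkIndexEquiv n hn) =
      fromBlocks (fromBlocks (of T) (replicateCol Unit c) (replicateRow Unit r)
        (diagonal fun _ => d)) 0 0 (diagonal fun _ => e) := by
  ext ((a | _) | _) ((b | _) | _) <;>
    simp only [blk, blkIndexEquiv, Equiv.coe_fn_mk, submatrix_apply, of_apply, Fin.is_lt,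
      lt_self_iff_false, ↓reduceDIte, ↓reduceIte, Fin.eta, fromBlocks_apply₁₁, fromBlocks_apply₁₂,
      fromBlocks_apply₂₁, fromBlocks_apply₂₂, replicateCol_apply, replicateRow_apply,
      Matrix.zero_apply, diagonal_apply_eq] <;>
    split_ifs <;> first | rfl | omega

theorem Wmat_mul_p1mat_submatrix {n : ℕ} (hn : 1 ≤ n) {G : Matrix (Fin (n-1)) (Fin (n-1)) ℝ}
    {ξ ξs : Fin (n-1) → ℝ} (hξ : G⁻¹ *ᵥ ξs = ξ) (s lam mu al : ℝ) :
    (Wmat n G * p1mat n ξ ξs s lam mu al).submatrix (blkIndexEquiv n hn) (blkIndexEquiv n hn) =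
      fromBlocks (fromBlocks
          (((mu * s) • G⁻¹ + (mu * (lam + mu) / ((lam + 3 * mu) * s)) • vecMulVec ξ ξ).map (↑))
          (replicateCol Unit fun a => -(Complex.I * ((2 * mu ^ 2 / (lam + 3 * mu) * ξ a : ℝ) : ℂ)))
          (replicateRow Unit
            (star fun a => -(Complex.I * ((2 * mu ^ 2 / (lam + 3 * mu) * ξ a : ℝ) : ℂ))))
          (diagonal fun _ => ((2 * mu * (lam + 2 * mu) / (lam + 3 * mu) * s : ℝ) : ℂ)))
        0 0 (diagonal fun _ => ((al * s : ℝ) : ℂ)) := by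
  rw [← submatrix_mul_equiv _ _ _ (blkIndexEquiv n hn), Wmat, p1mat,
    blk_submatrix_blkIndexEquiv, blk_submatrix_blkIndexEquiv, fromBlocks_multiply,
    fromBlocks_multiply]
  set c := mu * (lam + mu) / ((lam + 3 * mu) * s)
  set k := 2 * mu ^ 2 / (lam + 3 * mu)
  have hT : (of fun a b => ((G⁻¹ a b : ℝ) : ℂ)) *
      (of fun a b => ((mu * s * (if a = b then 1 else 0) + c * ξs a * ξ b : ℝ) : ℂ)) =
      ((mu * s) • G⁻¹ + c • vecMulVec ξ ξ).map (↑) := by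
    have hP : (of fun a b => mu * s * (if a = b then 1 else 0) + c * ξs a * ξ b) =
        (mu * s) • (1 : Matrix (Fin (n-1)) (Fin (n-1)) ℝ) + c • vecMulVec ξs ξ := by
      ext a b
      simp [one_apply, vecMulVec, mul_assoc]
    calc _ = (G⁻¹ * of fun a b => mu * s * (if a = b then 1 else 0) + c * ξs a * ξ b).map (↑) :=
          (Matrix.map_mul (f := Complex.ofRealHom)).symm
      _ = _ := by rw [hP, mul_add, mul_smul_comm, mul_smul_comm, mul_one, mul_vecMulVec, hξ]
  have hb : (of fun a b => ((G⁻¹ a b : ℝ) : ℂ)) *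
      replicateCol Unit (fun a => -(Complex.I * ((k * ξs a : ℝ) : ℂ))) =
      replicateCol Unit (fun a => -(Complex.I * ((k * ξ a : ℝ) : ℂ))) := by
    rw [← replicateCol_mulVec, ← hξ]
    congr 1
    ext a
    simp only [mulVec, dotProduct, of_apply, Complex.ofReal_mul, Complex.ofReal_sum,
      Finset.mul_sum, ← Finset.sum_neg_distrib]
    exact Finset.sum_congr rfl fun _ _ => by ring
  rw [hT, hb]
  simp only [← Pi.zero_def, replicateCol_zero, replicateRow_zero, Matrix.zero_mul,
    Matrix.mul_zero, add_zero, zero_add, diagonal_one, Matrix.one_mul, one_mul, fromBlocks_inj,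
    replicateRow_inj, and_true, true_and]
  ext b
  simp

theorem map_ofReal_sub_inv_smul_vecMulVec_I_mul {m : Type*} (M : Matrix m m ℝ) (x : m → ℝ)
    (k d : ℝ) :
    M.map (↑) - (d : ℂ)⁻¹ • vecMulVec (fun a => -(Complex.I * ((k * x a : ℝ) : ℂ)))
        (star fun a => -(Complex.I * ((k * x a : ℝ) : ℂ))) =
      (M - (k ^ 2 / d) • vecMulVec x x).map (↑) := by
  ext a b
  simp only [vecMulVec, Pi.star_apply, star_neg, star_mul', RCLike.star_def, Complex.conj_I,
    Complex.conj_ofReal, smul_of, Matrix.sub_apply, map_apply, of_apply, Pi.smul_apply,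
    smul_eq_mul, Complex.ofReal_mul, Complex.ofReal_sub, Complex.ofReal_div, Complex.ofReal_pow]
  linear_combination ((d : ℂ)⁻¹ * k ^ 2 * x a * x b) * Complex.I_sq

theorem schur_complement_decomposition {m : Type*} (M V : Matrix m m ℝ) {s lam mu : ℝ}
    (hs : 0 < s) (hmu : 0 < mu) (h2 : 0 < lam + 2 * mu) :
    (mu * s) • M + (mu * (lam + mu) / ((lam + 3 * mu) * s)) • V -
        ((2 * mu ^ 2 / (lam + 3 * mu)) ^ 2 / (2 * mu * (lam + 2 * mu) / (lam + 3 * mu) * s)) • V =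
      (mu * s) • (M - (s ^ 2)⁻¹ • V) + (2 * mu * (lam + mu) / ((lam + 2 * mu) * s)) • V := by
  have hcoef : mu * (lam + mu) / ((lam + 3 * mu) * s) -
      (2 * mu ^ 2 / (lam + 3 * mu)) ^ 2 / (2 * mu * (lam + 2 * mu) / (lam + 3 * mu) * s) =
      -(mu * s * (s ^ 2)⁻¹) + 2 * mu * (lam + mu) / ((lam + 2 * mu) * s) := by
    -- with `λ + 2μ` as a variable, every denominator is visibly positive to `field_simp`
    obtain ⟨p, hp, rfl⟩ : ∃ p, 0 < p ∧ lam = p - 2 * mu := ⟨lam + 2 * mu, h2, by ring⟩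
    ring_nf
    field_simp
    ring
  linear_combination (norm := module) hcoef • V

theorem stmt12_general (n : ℕ) (hn : 2 ≤ n)
    (G : Matrix (Fin (n-1)) (Fin (n-1)) ℝ) (hG : G.PosDef)
    (ξ : Fin (n-1) → ℝ) (hξ : ξ ≠ 0)
    (ξs : Fin (n-1) → ℝ) (hξs : ξs = G.mulVec ξ)
    (s : ℝ) (hs : s = Real.sqrt (ξ ⬝ᵥ G.mulVec ξ))
    (lam mu : ℝ) (hmu : 0 < mu) (hlm : 0 ≤ lam + mu)
    (al : ℝ) (hal : 0 < al) :
    (Wmat n G * p1mat n ξ ξs s lam mu al).PosSemidef := by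
  have hn1 : 1 ≤ n := by omega
  have hGξs : G⁻¹ *ᵥ ξs = ξ := by
    rw [hξs, mulVec_mulVec, nonsing_inv_mul _ ((isUnit_iff_isUnit_det G).mp hG.isUnit),
      one_mulVec]
  have hq : 0 < ξ ⬝ᵥ G *ᵥ ξ := by simpa using hG.dotProduct_mulVec_pos hξ
  have hs0 : 0 < s := hs ▸ Real.sqrt_pos.mpr hq
  have hs2 : ξ ⬝ᵥ G *ᵥ ξ = s ^ 2 := by rw [hs, Real.sq_sqrt hq.le]
  have h2 : 0 < lam + 2 * mu := by linarith
  have h3 : 0 < lam + 3 * mu := by linarith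
  have hCS := hG.posSemidef_inv_sub_smul_vecMulVec ξ
  rw [star_trivial, hs2] at hCS
  have hV : (vecMulVec ξ ξ).PosSemidef := by simpa using posSemidef_vecMulVec_self_star ξ
  rw [← posSemidef_submatrix_equiv (blkIndexEquiv n hn1), Wmat_mul_p1mat_submatrix hn1 hGξs,
    posSemidef_fromBlocks_zero_iff _
      (posDef_diagonal_iff.mpr fun _ => Complex.zero_lt_real.mpr (by positivity)),
    posSemidef_fromBlocks_replicateCol_iff _ _ (Complex.zero_lt_real.mpr (by positivity)),
    map_ofReal_sub_inv_smul_vecMulVec_I_mul, schur_complement_decomposition _ _ hs0 hmu h2]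
  exact ((hCS.smul (mul_pos hmu hs0).le).add (hV.smul (by positivity))).map_ofReal

/-- W·p₁ is positive semidefinite. -/
theorem stmt12 (n : ℕ) (hn : 2 ≤ n)
    (G : Matrix (Fin (n-1)) (Fin (n-1)) ℝ) (hG : G.PosDef)
    (ξ : Fin (n-1) → ℝ) (hξ : ξ ≠ 0)
    (ξs : Fin (n-1) → ℝ) (hξs : ξs = G.mulVec ξ)
    (s : ℝ) (hs : s = Real.sqrt (ξ ⬝ᵥ G.mulVec ξ))
    (lam mu : ℝ) (hmu : 0 < mu) (hlm : 0 ≤ lam + mu)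
    (c : ℝ) (hc : c = (lam + mu)/(lam + 3*mu)) (al : ℝ) (hal : 0 < al) :
    (Wmat n G * p1mat n ξ ξs s lam mu al).PosSemidef :=
  stmt12_general n hn G hG ξ hξ ξs hξs s hs lam mu hmu hlm al hal
end
end
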